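/- Consider the post-collision momentum map in an orthonormal frame: for p,q∈ℝ³ and ω∈𝕊²⊂ℝ³, define p'(p,q,ω)∈ℝ³ componentwise by p'_j = p_j + 2(−q⁰(n·ω)/√s + q·ω + (n·ω)(n·q)/(√s(n⁰+√s)))·(ω_j + (n·ω)n_j/(√s(n⁰+√s))), where n=p+q, n⁰=p⁰+q⁰, s=(n⁰)²−|n|², and set q'(p,q,ω)=p+q−p'(p,q,ω). Then for every multi-index A∈ℕ³ with |A|≥1 there is a constant C>0, independent of p, such that for all p,q∈ℝ³ and ω∈𝕊², |∂^A_p p'(p,q,ω)| + |∂^A_p q'(p,q,ω)| ≤ C (q⁰)^{|A|+4}. -/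

import Mathlib

open Matrix

noncomputable section

/-- First-order partial derivative in the momentum variable `p_i`. -/
def pd (i : Fin 3) (f : (Fin 3 → ℝ) → ℝ) : (Fin 3 → ℝ) → ℝ :=
  fun p => fderiv ℝ f p (Pi.single i 1)

/-- Mixed partial derivative `∂^A` for a multi-index `A ∈ ℕ³`. -/
def multiDeriv (A : Fin 3 → ℕ) (f : (Fin 3 → ℝ) → ℝ) : (Fin 3 → ℝ) → ℝ :=
  (pd 0)^[A 0] ((pd 1)^[A 1] ((pd 2)^[A 2] f))

/-- Post-collision momentum `p'(p,q,ω)` in an orthonormal frame, with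
`p⁰ = √(1+|p|²)`, `n = p+q`, `n⁰ = p⁰+q⁰`, `s = (n⁰)² − |n|²`. -/
def postP (p q ω : Fin 3 → ℝ) : Fin 3 → ℝ := fun j =>
  let p0 := Real.sqrt (1 + p ⬝ᵥ p)
  let q0 := Real.sqrt (1 + q ⬝ᵥ q)
  let n := p + q
  let n0 := p0 + q0
  let s := n0^2 - n ⬝ᵥ n
  p j + 2 * (-(q0 * (n ⬝ᵥ ω) / Real.sqrt s) + q ⬝ᵥ ω
        + (n ⬝ᵥ ω) * (n ⬝ᵥ q) / (Real.sqrt s * (n0 + Real.sqrt s)))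
      * (ω j + (n ⬝ᵥ ω) * n j / (Real.sqrt s * (n0 + Real.sqrt s)))

/-- Post-collision momentum `q'(p,q,ω) = p + q − p'(p,q,ω)`. -/
def postQ (p q ω : Fin 3 → ℝ) : Fin 3 → ℝ := p + q - postP p q ω

/-!
Every component of `p'` and `q'` is a finite sum of terms `γ(q, ω) p^a (p⁰)^b (√s)^c (n⁰ + √s)^f`
with `c, f ≤ 0` and `|γ| ≲ (q⁰)^j`; for this, `n·q` is rewritten through `s`. Such sums are
stable under `∂_{p_i}`: the derivative of `p^a` lowers its degree, and the logarithmic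
derivatives of `p⁰`, `√s` and `n⁰ + √s` are themselves such sums, which decay in `p` and carry at
most one extra power of `q⁰`. Counting `√s` as having order `1/2` in `p`, each derivative lowers
the order of growth in `p` by one, from order one for `p'` and `q'`. A term of nonpositive order
is bounded by a power of `q⁰` because `p⁰ ≤ s q⁰`.
-/

namespace RelativisticCollision

section Kinematics

variable {ι : Type*} [Fintype ι]

def energy (p : ι → ℝ) : ℝ := √(1 + p ⬝ᵥ p)

/-- The Mandelstam variable `s = (p⁰ + q⁰)² - |p + q|²`, expanded (see `mandelstamS_eq`). -/
def mandelstamS (p q : ι → ℝ) : ℝ := 2 + 2 * energy p * energy q - 2 * (p ⬝ᵥ q)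

def sqrtS (p q : ι → ℝ) : ℝ := √(mandelstamS p q)

/-- `n⁰ + √s`, where `n⁰ = p⁰ + q⁰`. -/
def totalEnergyAddSqrtS (p q : ι → ℝ) : ℝ := energy p + energy q + sqrtS p q

lemma dotProduct_self_nonneg (p : ι → ℝ) : 0 ≤ p ⬝ᵥ p := by
  simpa using dotProduct_star_self_nonneg p

lemma sq_apply_le_dotProduct_self (p : ι → ℝ) (k : ι) : p k ^ 2 ≤ p ⬝ᵥ p := by
  simpa only [dotProduct, sq] using
    Finset.single_le_sum (fun l _ => mul_self_nonneg (p l)) (Finset.mem_univ k)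

lemma sq_dotProduct_le (p q : ι → ℝ) : (p ⬝ᵥ q) ^ 2 ≤ (p ⬝ᵥ p) * (q ⬝ᵥ q) := by
  simpa only [dotProduct, sq] using Finset.sum_mul_sq_le_sq_mul_sq Finset.univ p q

lemma dotProduct_le_sqrt_mul_sqrt (p q : ι → ℝ) : p ⬝ᵥ q ≤ √(p ⬝ᵥ p) * √(q ⬝ᵥ q) := by
  rw [← Real.sqrt_mul (dotProduct_self_nonneg p)]
  exact (le_abs_self _).trans (Real.abs_le_sqrt (sq_dotProduct_le p q))

lemma energy_sq (p : ι → ℝ) : energy p ^ 2 = 1 + p ⬝ᵥ p :=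
  Real.sq_sqrt (by linarith [dotProduct_self_nonneg p])

lemma one_le_energy (p : ι → ℝ) : 1 ≤ energy p :=
  Real.one_le_sqrt.2 (by linarith [dotProduct_self_nonneg p])

lemma energy_pos (p : ι → ℝ) : 0 < energy p := one_pos.trans_le (one_le_energy p)

lemma sqrt_dotProduct_self_le_energy (p : ι → ℝ) : √(p ⬝ᵥ p) ≤ energy p :=
  Real.sqrt_le_sqrt (by linarith)

lemma abs_apply_le_energy (p : ι → ℝ) (k : ι) : |p k| ≤ energy p :=
  Real.abs_le_sqrt (by linarith [sq_apply_le_dotProduct_self p k])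

lemma abs_dotProduct_le_energy (q : ι → ℝ) {ω : ι → ℝ} (hω : ω ⬝ᵥ ω = 1) :
    |q ⬝ᵥ ω| ≤ energy q := by
  have h := sq_dotProduct_le q ω
  rw [hω, mul_one] at h
  exact Real.abs_le_sqrt (by linarith)

lemma one_add_dotProduct_le_energy_mul (p q : ι → ℝ) : 1 + p ⬝ᵥ q ≤ energy p * energy q := by
  have hpq : 2 * (p ⬝ᵥ q) ≤ p ⬝ᵥ p + q ⬝ᵥ q := by
    have := dotProduct_self_nonneg (p - q)
    simp only [sub_dotProduct, dotProduct_sub, dotProduct_comm q p] at this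
    linarith
  rw [energy, energy, ← Real.sqrt_mul (by linarith [dotProduct_self_nonneg p])]
  exact (le_abs_self _).trans (Real.abs_le_sqrt (by nlinarith [sq_dotProduct_le p q]))

lemma mandelstamS_eq (p q : ι → ℝ) :
    (energy p + energy q) ^ 2 - (p + q) ⬝ᵥ (p + q) = mandelstamS p q := by
  simp only [add_dotProduct, dotProduct_add, dotProduct_comm q p, mandelstamS]
  linear_combination energy_sq p + energy_sq q

lemma four_le_mandelstamS (p q : ι → ℝ) : 4 ≤ mandelstamS p q := by
  unfold mandelstamS
  linarith [one_add_dotProduct_le_energy_mul p q]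

lemma energy_le_mandelstamS_mul_energy (p q : ι → ℝ) :
    energy p ≤ mandelstamS p q * energy q := by
  set y := √(q ⬝ᵥ q)
  have hy : 0 ≤ y := Real.sqrt_nonneg _
  have hy2 : y ^ 2 = q ⬝ᵥ q := Real.sq_sqrt (dotProduct_self_nonneg q)
  have hpq : p ⬝ᵥ q ≤ energy p * y :=
    (dotProduct_le_sqrt_mul_sqrt p q).trans
      (mul_le_mul_of_nonneg_right (sqrt_dotProduct_self_le_energy p) hy)
  -- `s q⁰ ≥ 2 p⁰ q⁰ (q⁰ - |q|)`, and `2 q⁰ (q⁰ - |q|) = 1 + (q⁰ - |q|)²` as `(q⁰)² = 1 + |q|²`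
  have hQ : 1 ≤ 2 * energy q * (energy q - y) := by nlinarith [energy_sq q]
  have hP := energy_pos p
  have hQ0 := energy_pos q
  unfold mandelstamS
  nlinarith [mul_le_mul_of_nonneg_left hpq hQ0.le]

lemma two_le_sqrtS (p q : ι → ℝ) : 2 ≤ sqrtS p q :=
  Real.le_sqrt_of_sq_le (by linarith [four_le_mandelstamS p q])

lemma sqrtS_pos (p q : ι → ℝ) : 0 < sqrtS p q := two_pos.trans_le (two_le_sqrtS p q)

lemma sqrtS_sq (p q : ι → ℝ) : sqrtS p q ^ 2 = mandelstamS p q :=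
  Real.sq_sqrt (by linarith [four_le_mandelstamS p q])

lemma energy_le_totalEnergyAddSqrtS (p q : ι → ℝ) : energy p ≤ totalEnergyAddSqrtS p q := by
  unfold totalEnergyAddSqrtS
  linarith [energy_pos q, sqrtS_pos p q]

lemma totalEnergyAddSqrtS_pos (p q : ι → ℝ) : 0 < totalEnergyAddSqrtS p q :=
  (energy_pos p).trans_le (energy_le_totalEnergyAddSqrtS p q)

end Kinematics

section Inequalities

variable {α : Type*} [Field α] [LinearOrder α] [IsStrictOrderedRing α]

lemma zpow_le_zpow_left_of_nonpos {a b : α} (ha : 0 < a) (hab : a ≤ b) {n : ℤ} (hn : n ≤ 0) :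
    b ^ n ≤ a ^ n := by
  obtain ⟨m, rfl⟩ : ∃ m : ℕ, n = -m := ⟨n.natAbs, by omega⟩
  simp only [_root_.zpow_neg, zpow_natCast]
  exact inv_anti₀ (pow_pos ha m) (pow_le_pow_left₀ ha.le hab m)

lemma zpow_mul_zpow_le_zpow_max {P R Q : α} (hP : 1 ≤ P) (hR : 1 ≤ R) (hQ : 0 ≤ Q)
    (hPRQ : P ≤ R ^ 2 * Q) {u c : ℤ} (hc : c ≤ 0) (huc : 2 * u + c ≤ 0) :
    P ^ u * R ^ c ≤ Q ^ max u 0 := by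
  have hR0 : R ≠ 0 := (one_pos.trans_le hR).ne'
  rcases le_or_gt u 0 with hu | hu
  · rw [max_eq_right hu, zpow_zero]
    exact mul_le_one₀ (zpow_le_one_of_nonpos₀ hP hu) (zpow_nonneg (zero_le_one.trans hR) c)
      (zpow_le_one_of_nonpos₀ hR hc)
  · rw [max_eq_left hu.le]
    calc P ^ u * R ^ c ≤ (R ^ 2 * Q) ^ u * R ^ c :=
          mul_le_mul_of_nonneg_right (zpow_le_zpow_left₀ hu.le (zero_le_one.trans hP) hPRQ)
            (zpow_nonneg (zero_le_one.trans hR) c)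
      _ = R ^ (2 * u + c) * Q ^ u := by
          rw [mul_zpow, zpow_add₀ hR0, _root_.zpow_mul, zpow_ofNat]
          ring
      _ ≤ 1 * Q ^ u :=
          mul_le_mul_of_nonneg_right (zpow_le_one_of_nonpos₀ hR huc) (zpow_nonneg hQ u)
      _ = Q ^ u := one_mul _

end Inequalities

lemma sqrt_sum_sq_le_card_mul {κ : Type*} [Fintype κ] {x : κ → ℝ} {B : ℝ} (hB : 0 ≤ B)
    (h : ∀ j, |x j| ≤ B) : √(∑ j, x j ^ 2) ≤ Fintype.card κ * B := by
  refine Real.sqrt_le_iff.2 ⟨by positivity, ?_⟩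
  calc ∑ j, x j ^ 2 ≤ ∑ _j : κ, B ^ 2 :=
        Finset.sum_le_sum fun j _ => sq_le_sq' (abs_le.1 (h j)).1 (abs_le.1 (h j)).2
    _ = Fintype.card κ * B ^ 2 := by simp
    _ ≤ (Fintype.card κ * B) ^ 2 := by
        rw [mul_pow]
        exact mul_le_mul_of_nonneg_right (by exact_mod_cast Nat.le_self_pow two_ne_zero _)
          (sq_nonneg B)

section DerivAlong

variable {E : Type*} [NormedAddCommGroup E] [NormedSpace ℝ E] {v x : E} {f g : E → ℝ} {d e : ℝ}

/-- Unlike `HasLineDerivAt`, this includes differentiability at `x`, so it is stable under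
products. -/
def HasDerivAlongAt (v : E) (f : E → ℝ) (d : ℝ) (x : E) : Prop :=
  ∃ L : E →L[ℝ] ℝ, HasFDerivAt f L x ∧ L v = d

lemma _root_.HasFDerivAt.hasDerivAlongAt {L : E →L[ℝ] ℝ} (h : HasFDerivAt f L x) :
    HasDerivAlongAt v f (L v) x :=
  ⟨L, h, rfl⟩

lemma hasDerivAlongAt_const (c : ℝ) : HasDerivAlongAt v (fun _ => c) 0 x :=
  (hasFDerivAt_const c x).hasDerivAlongAt

lemma _root_.HasDerivAt.comp_hasDerivAlongAt {φ : ℝ → ℝ} {φ' : ℝ} (hφ : HasDerivAt φ φ' (f x))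
    (hf : HasDerivAlongAt v f d x) : HasDerivAlongAt v (fun y => φ (f y)) (φ' * d) x := by
  obtain ⟨L, hL, rfl⟩ := hf
  exact (hφ.comp_hasFDerivAt x hL).hasDerivAlongAt

namespace HasDerivAlongAt

lemma fderiv_apply (h : HasDerivAlongAt v f d x) : fderiv ℝ f x v = d := by
  obtain ⟨L, hL, rfl⟩ := h
  rw [hL.fderiv]

lemma congr_deriv (h : HasDerivAlongAt v f d x) (he : d = e) : HasDerivAlongAt v f e x :=
  he ▸ h

lemma add (hf : HasDerivAlongAt v f d x) (hg : HasDerivAlongAt v g e x) :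
    HasDerivAlongAt v (fun y => f y + g y) (d + e) x := by
  obtain ⟨L, hL, rfl⟩ := hf
  obtain ⟨M, hM, rfl⟩ := hg
  exact (hL.add hM).hasDerivAlongAt

lemma sub (hf : HasDerivAlongAt v f d x) (hg : HasDerivAlongAt v g e x) :
    HasDerivAlongAt v (fun y => f y - g y) (d - e) x := by
  obtain ⟨L, hL, rfl⟩ := hf
  obtain ⟨M, hM, rfl⟩ := hg
  exact (hL.sub hM).hasDerivAlongAt

lemma mul (hf : HasDerivAlongAt v f d x) (hg : HasDerivAlongAt v g e x) :
    HasDerivAlongAt v (fun y => f y * g y) (d * g x + f x * e) x := by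
  obtain ⟨L, hL, rfl⟩ := hf
  obtain ⟨M, hM, rfl⟩ := hg
  refine (hL.mul hM).hasDerivAlongAt.congr_deriv ?_
  simp only [_root_.add_apply, _root_.smul_apply, smul_eq_mul]
  ring

lemma const_mul (c : ℝ) (hf : HasDerivAlongAt v f d x) :
    HasDerivAlongAt v (fun y => c * f y) (c * d) x :=
  ((hasDerivAlongAt_const c).mul hf).congr_deriv (by ring)

lemma zpow (m : ℤ) (hf : HasDerivAlongAt v f d x) (hfx : f x ≠ 0) :
    HasDerivAlongAt v (fun y => f y ^ m) (f x ^ m * (m * d / f x)) x := by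
  refine ((hasDerivAt_zpow m (f x) (.inl hfx)).comp_hasDerivAlongAt hf).congr_deriv ?_
  rw [zpow_sub_one₀ hfx]
  ring

lemma sum {β : Type*} {s : Finset β} {F : β → E → ℝ} {D : β → ℝ}
    (h : ∀ k ∈ s, HasDerivAlongAt v (F k) (D k) x) :
    HasDerivAlongAt v (fun y => ∑ k ∈ s, F k y) (∑ k ∈ s, D k) x := by
  choose! L hL hLv using h
  refine (HasFDerivAt.fun_sum hL).hasDerivAlongAt.congr_deriv ?_
  rw [_root_.sum_apply]
  exact Finset.sum_congr rfl hLv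

end HasDerivAlongAt

end DerivAlong

section KinematicDerivatives

variable {ι : Type*} [Fintype ι] {v x : ι → ℝ}

lemma hasDerivAlongAt_apply (k : ι) : HasDerivAlongAt v (fun y => y k) (v k) x :=
  (hasFDerivAt_apply k x).hasDerivAlongAt

lemma hasDerivAlongAt_dotProduct_self :
    HasDerivAlongAt v (fun y => y ⬝ᵥ y) (2 * (x ⬝ᵥ v)) x := by
  refine (HasDerivAlongAt.sum fun k _ =>
    (hasDerivAlongAt_apply k).mul (hasDerivAlongAt_apply k)).congr_deriv ?_
  simp only [dotProduct, Finset.mul_sum]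
  exact Finset.sum_congr rfl fun k _ => by ring

lemma hasDerivAlongAt_dotProduct_right (w : ι → ℝ) :
    HasDerivAlongAt v (fun y => y ⬝ᵥ w) (v ⬝ᵥ w) x := by
  refine (HasDerivAlongAt.sum fun k _ =>
    (hasDerivAlongAt_apply k).mul (hasDerivAlongAt_const (w k))).congr_deriv ?_
  simp only [dotProduct, mul_zero, add_zero]

lemma hasDerivAlongAt_energy : HasDerivAlongAt v energy (x ⬝ᵥ v / energy x) x := by
  have hx : 1 + x ⬝ᵥ x ≠ 0 := by linarith [dotProduct_self_nonneg x]
  refine ((Real.hasDerivAt_sqrt hx).comp_hasDerivAlongAt (f := fun y => 1 + y ⬝ᵥ y)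
    ((hasDerivAlongAt_const 1).add hasDerivAlongAt_dotProduct_self)).congr_deriv ?_
  rw [← energy]
  field_simp
  ring

lemma hasDerivAlongAt_mandelstamS (q : ι → ℝ) :
    HasDerivAlongAt v (mandelstamS · q)
      (2 * energy q * (x ⬝ᵥ v) / energy x - 2 * (v ⬝ᵥ q)) x :=
  (((hasDerivAlongAt_const 2).add ((hasDerivAlongAt_energy.const_mul 2).mul
    (hasDerivAlongAt_const (energy q)))).sub
    ((hasDerivAlongAt_dotProduct_right q).const_mul 2)).congr_deriv (by ring)

lemma hasDerivAlongAt_sqrtS (q : ι → ℝ) :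
    HasDerivAlongAt v (sqrtS · q)
      ((energy q * (x ⬝ᵥ v) / energy x - v ⬝ᵥ q) / sqrtS x q) x := by
  have hS : mandelstamS x q ≠ 0 := by linarith [four_le_mandelstamS x q]
  refine ((Real.hasDerivAt_sqrt hS).comp_hasDerivAlongAt (f := (mandelstamS · q))
    (hasDerivAlongAt_mandelstamS q)).congr_deriv ?_
  rw [← sqrtS]
  field_simp

lemma hasDerivAlongAt_totalEnergyAddSqrtS (q : ι → ℝ) :
    HasDerivAlongAt v (totalEnergyAddSqrtS · q)
      (x ⬝ᵥ v / energy x + (energy q * (x ⬝ᵥ v) / energy x - v ⬝ᵥ q) / sqrtS x q) x :=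
  ((hasDerivAlongAt_energy.add (hasDerivAlongAt_const (energy q))).add
    (hasDerivAlongAt_sqrtS q)).congr_deriv (by ring)

end KinematicDerivatives

section Monomials

variable {ι : Type*} [Fintype ι]

def monomial (a : ι → ℕ) (b c f : ℤ) (p q : ι → ℝ) : ℝ :=
  (∏ k, p k ^ a k) * energy p ^ b * sqrtS p q ^ c * totalEnergyAddSqrtS p q ^ f

lemma monomial_mul (a a' : ι → ℕ) (b b' c c' f f' : ℤ) (p q : ι → ℝ) :
    monomial (a + a') (b + b') (c + c') (f + f') p q
      = monomial a b c f p q * monomial a' b' c' f' p q := by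
  simp only [monomial, Pi.add_apply, pow_add, Finset.prod_mul_distrib,
    zpow_add₀ (energy_pos p).ne', zpow_add₀ (sqrtS_pos p q).ne',
    zpow_add₀ (totalEnergyAddSqrtS_pos p q).ne']
  ring

lemma abs_prod_pow_le (a : ι → ℕ) (p : ι → ℝ) :
    |∏ k, p k ^ a k| ≤ energy p ^ (∑ k, (a k : ℤ)) := by
  rw [Finset.abs_prod, ← Nat.cast_sum, zpow_natCast, ← Finset.prod_pow_eq_pow_sum]
  exact Finset.prod_le_prod (fun k _ => abs_nonneg _) fun k _ => by
    rw [abs_pow]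
    exact pow_le_pow_left₀ (abs_nonneg _) (abs_apply_le_energy p k) _

lemma abs_monomial_le {a : ι → ℕ} {b c f : ℤ} (hc : c ≤ 0) (hf : f ≤ 0)
    (hz : 2 * (∑ k, (a k : ℤ) + b) + c + 2 * f ≤ 0) (p q : ι → ℝ) :
    |monomial a b c f p q| ≤ energy q ^ max (∑ k, (a k : ℤ) + b + f) 0 := by
  have hP := energy_pos p
  have hR := sqrtS_pos p q
  have hG := totalEnergyAddSqrtS_pos p q
  calc |monomial a b c f p q|
      = |∏ k, p k ^ a k| * energy p ^ b * sqrtS p q ^ c * totalEnergyAddSqrtS p q ^ f := by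
        simp only [monomial, abs_mul, abs_of_pos (zpow_pos hP _), abs_of_pos (zpow_pos hR _),
          abs_of_pos (zpow_pos hG _)]
    _ ≤ energy p ^ (∑ k, (a k : ℤ)) * energy p ^ b * sqrtS p q ^ c * energy p ^ f := by
        gcongr
        · exact abs_prod_pow_le a p
        · exact zpow_le_zpow_left_of_nonpos hP (energy_le_totalEnergyAddSqrtS p q) hf
    _ = energy p ^ (∑ k, (a k : ℤ) + b + f) * sqrtS p q ^ c := by
        rw [zpow_add₀ hP.ne', zpow_add₀ hP.ne']
        ring
    _ ≤ energy q ^ max (∑ k, (a k : ℤ) + b + f) 0 :=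
        zpow_mul_zpow_le_zpow_max (one_le_energy p) (by linarith [two_le_sqrtS p q])
          (energy_pos q).le (by rw [sqrtS_sq]; exact energy_le_mandelstamS_mul_energy p q) hc
          (by omega)

/-- The logarithmic derivative of `(p⁰)^b (√s)^c (n⁰ + √s)^f` along `e_i`. -/
def logDerivAlong (i : ι) (b c f : ℤ) (p q : ι → ℝ) : ℝ :=
  b * (p i / energy p) / energy p
    + c * ((energy q * p i / energy p - q i) / sqrtS p q) / sqrtS p q
    + f * (p i / energy p + (energy q * p i / energy p - q i) / sqrtS p q)
      / totalEnergyAddSqrtS p q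

variable [DecidableEq ι]

lemma sum_natCast_sub_single {a : ι → ℕ} {i : ι} (ha : a i ≠ 0) :
    ∑ k, ((a - Pi.single i 1 : ι → ℕ) k : ℤ) = ∑ k, (a k : ℤ) - 1 := by
  have h (k : ι) : ((a - Pi.single i 1 : ι → ℕ) k : ℤ) = a k - (Pi.single i 1 : ι → ℤ) k := by
    rcases eq_or_ne k i with rfl | hk
    · simp only [Pi.sub_apply, Pi.single_eq_same]
      omega
    · simp [hk]
  rw [Finset.sum_congr rfl fun k _ => h k, Finset.sum_sub_distrib]
  simp

lemma prod_pow_sub_single (a : ι → ℕ) (i : ι) (p : ι → ℝ) :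
    ∏ k, p k ^ (a - Pi.single i 1 : ι → ℕ) k
      = p i ^ (a i - 1) * ∏ k ∈ Finset.univ.erase i, p k ^ a k := by
  rw [← Finset.mul_prod_erase _ _ (Finset.mem_univ i)]
  congr 1
  · simp
  · exact Finset.prod_congr rfl fun k hk => by simp [Finset.ne_of_mem_erase hk]

lemma hasDerivAlongAt_prod_pow (i : ι) (a : ι → ℕ) (p : ι → ℝ) :
    HasDerivAlongAt (Pi.single i 1) (fun x => ∏ k, x k ^ a k)
      (a i * ∏ k, p k ^ (a - Pi.single i 1 : ι → ℕ) k) p := by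
  refine (HasFDerivAt.finsetProd fun k _ =>
    (hasFDerivAt_apply k p).pow (a k)).hasDerivAlongAt.congr_deriv ?_
  rw [prod_pow_sub_single]
  simp only [nsmul_eq_mul, _root_.sum_apply, _root_.smul_apply, ContinuousLinearMap.proj_apply,
    Pi.single_apply, smul_eq_mul, mul_ite, mul_one, mul_zero, Finset.sum_ite_eq',
    Finset.mem_univ, ↓reduceIte]
  ring

lemma hasDerivAlongAt_monomial (i : ι) (a : ι → ℕ) (b c f : ℤ) (p q : ι → ℝ) :
    HasDerivAlongAt (Pi.single i 1) (monomial a b c f · q)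
      (a i * monomial (a - Pi.single i 1) b c f p q
        + monomial a b c f p q * logDerivAlong i b c f p q) p := by
  refine ((((hasDerivAlongAt_prod_pow i a p).mul
    (hasDerivAlongAt_energy.zpow b (energy_pos p).ne')).mul
    ((hasDerivAlongAt_sqrtS q).zpow c (sqrtS_pos p q).ne')).mul
    ((hasDerivAlongAt_totalEnergyAddSqrtS q).zpow f
      (totalEnergyAddSqrtS_pos p q).ne')).congr_deriv ?_
  simp only [monomial, logDerivAlong, dotProduct_single, single_dotProduct, mul_one, one_mul]
  ring

end Monomials

section MonomialSums

variable {ι : Type*} [Fintype ι]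

def BoundedByEnergyPow (j : ℕ) (γ : (ι → ℝ) → (ι → ℝ) → ℝ) : Prop :=
  ∃ K, ∀ q ω : ι → ℝ, ω ⬝ᵥ ω = 1 → |γ q ω| ≤ K * energy q ^ j

namespace BoundedByEnergyPow

variable {j j' : ℕ} {γ γ' : (ι → ℝ) → (ι → ℝ) → ℝ}

lemma mul (h : BoundedByEnergyPow j γ) (h' : BoundedByEnergyPow j' γ') :
    BoundedByEnergyPow (j + j') fun q ω => γ q ω * γ' q ω := by
  obtain ⟨K, hK⟩ := h
  obtain ⟨K', hK'⟩ := h'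
  refine ⟨K * K', fun q ω hω => ?_⟩
  rw [abs_mul, pow_add, mul_mul_mul_comm]
  exact mul_le_mul (hK q ω hω) (hK' q ω hω) (abs_nonneg _) ((abs_nonneg _).trans (hK q ω hω))

lemma const (r : ℝ) : BoundedByEnergyPow 0 fun (_ _ : ι → ℝ) => r :=
  ⟨|r|, fun _ _ _ => by simp⟩

lemma energy : BoundedByEnergyPow 1 fun (q _ : ι → ℝ) => energy q :=
  ⟨1, fun q _ _ => by simp [abs_of_pos (energy_pos q)]⟩

lemma apply (k : ι) : BoundedByEnergyPow 1 fun (q _ : ι → ℝ) => q k :=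
  ⟨1, fun q _ _ => by simpa using abs_apply_le_energy q k⟩

lemma unit_apply (k : ι) : BoundedByEnergyPow 0 fun (_ ω : ι → ℝ) => ω k :=
  ⟨1, fun _ ω hω => by
    rw [pow_zero, mul_one, ← sq_le_one_iff_abs_le_one, ← hω]
    exact sq_apply_le_dotProduct_self ω k⟩

lemma dotProduct_unit : BoundedByEnergyPow 1 fun (q ω : ι → ℝ) => q ⬝ᵥ ω :=
  ⟨1, fun q _ hω => by simpa using abs_dotProduct_le_energy q hω⟩

end BoundedByEnergyPow

/-- Finite sums of terms `γ(q, ω) p^a (p⁰)^b (√s)^c (n⁰ + √s)^f` with `|γ| ≲ (q⁰)^j` and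
`c, f ≤ 0`. As `|p| ≤ p⁰ ≤ n⁰ + √s` and `√s ≲ √(p⁰ q⁰)`, the weight `z` bounds twice the order of
growth in `p`, while `l₁` and `l₂` control the power of `q⁰` (see `IsMonomialSum.exists_bound`). -/
inductive IsMonomialSum (z l₁ l₂ : ℤ) : ((ι → ℝ) → (ι → ℝ) → (ι → ℝ) → ℝ) → Prop
  | zero : IsMonomialSum z l₁ l₂ fun _ _ _ => 0
  | term {γ : (ι → ℝ) → (ι → ℝ) → ℝ} {j : ℕ} {a : ι → ℕ} {b c f : ℤ}
      (hγ : BoundedByEnergyPow j γ) (hc : c ≤ 0) (hf : f ≤ 0)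
      (hz : 2 * (∑ k, (a k : ℤ) + b) + c + 2 * f ≤ z)
      (hl₁ : j + (∑ k, (a k : ℤ) + b) + f ≤ l₁) (hl₂ : j ≤ l₂) :
      IsMonomialSum z l₁ l₂ fun p q ω => γ q ω * monomial a b c f p q
  | add {F G : (ι → ℝ) → (ι → ℝ) → (ι → ℝ) → ℝ} :
      IsMonomialSum z l₁ l₂ F → IsMonomialSum z l₁ l₂ G →
        IsMonomialSum z l₁ l₂ fun p q ω => F p q ω + G p q ω

namespace IsMonomialSum

variable {z l₁ l₂ z' l₁' l₂' : ℤ} {F G : (ι → ℝ) → (ι → ℝ) → (ι → ℝ) → ℝ}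

lemma congr (h : IsMonomialSum z l₁ l₂ F) (hFG : ∀ p q ω, F p q ω = G p q ω) :
    IsMonomialSum z l₁ l₂ G := by
  rwa [show F = G from funext fun p => funext fun q => funext (hFG p q)] at h

lemma mono (h : IsMonomialSum z l₁ l₂ F) (hz : z ≤ z') (h₁ : l₁ ≤ l₁') (h₂ : l₂ ≤ l₂') :
    IsMonomialSum z' l₁' l₂' F := by
  induction h with
  | zero => exact zero
  | term hγ hc hf hz' hl₁ hl₂ => exact term hγ hc hf (by omega) (by omega) (by omega)
  | add _ _ ih₁ ih₂ => exact add ih₁ ih₂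

lemma add_max (hF : IsMonomialSum z l₁ l₂ F) (hG : IsMonomialSum z' l₁' l₂' G) :
    IsMonomialSum (max z z') (max l₁ l₁') (max l₂ l₂') fun p q ω => F p q ω + G p q ω :=
  add (hF.mono (le_max_left ..) (le_max_left ..) (le_max_left ..))
    (hG.mono (le_max_right ..) (le_max_right ..) (le_max_right ..))

lemma sum {β : Type*} (s : Finset β) {F : β → (ι → ℝ) → (ι → ℝ) → (ι → ℝ) → ℝ}
    (h : ∀ k ∈ s, IsMonomialSum z l₁ l₂ (F k)) :
    IsMonomialSum z l₁ l₂ fun p q ω => ∑ k ∈ s, F k p q ω := by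
  classical
  induction s using Finset.induction_on with
  | empty => simpa using zero
  | insert k s hk ih =>
    simp_rw [Finset.sum_insert hk]
    exact add (h k (Finset.mem_insert_self k s))
      (ih fun k' hk' => h k' (Finset.mem_insert_of_mem hk'))

lemma mul (hF : IsMonomialSum z l₁ l₂ F) (hG : IsMonomialSum z' l₁' l₂' G) :
    IsMonomialSum (z + z') (l₁ + l₁') (l₂ + l₂') fun p q ω => F p q ω * G p q ω := by
  induction hF with
  | zero => exact zero.congr fun _ _ _ => (zero_mul _).symm
  | add _ _ ih₁ ih₂ => exact (add ih₁ ih₂).congr fun _ _ _ => (add_mul ..).symm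
  | @term γ j a b c f hγ hc hf hz hl₁ hl₂ =>
    induction hG with
    | zero => exact zero.congr fun _ _ _ => (mul_zero _).symm
    | add _ _ ih₁ ih₂ => exact (add ih₁ ih₂).congr fun _ _ _ => (mul_add ..).symm
    | @term γ' j' a' b' c' f' hγ' hc' hf' hz' hl₁' hl₂' =>
      have hsum : ∑ k, ((a + a') k : ℤ) = ∑ k, (a k : ℤ) + ∑ k, (a' k : ℤ) := by
        simp [Finset.sum_add_distrib]
      refine (term (a := a + a') (b := b + b') (hγ.mul hγ') (add_nonpos hc hc')
        (add_nonpos hf hf') ?_ ?_ ?_).congr fun p q ω => ?_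
      · rw [hsum]; omega
      · rw [hsum]; push_cast; omega
      · push_cast; omega
      · rw [monomial_mul]; ring

theorem exists_bound (h : IsMonomialSum z l₁ l₂ F) (hz : z ≤ 0) {N : ℕ} (h₁ : l₁ ≤ N)
    (h₂ : l₂ ≤ N) : ∃ C, ∀ p q ω : ι → ℝ, ω ⬝ᵥ ω = 1 → |F p q ω| ≤ C * energy q ^ N := by
  induction h with
  | zero => exact ⟨0, fun _ _ _ _ => by simp⟩
  | add _ _ ih₁ ih₂ =>
    obtain ⟨C₁, hC₁⟩ := ih₁
    obtain ⟨C₂, hC₂⟩ := ih₂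
    exact ⟨C₁ + C₂, fun p q ω hω => (abs_add_le _ _).trans
      (by linarith [hC₁ p q ω hω, hC₂ p q ω hω])⟩
  | @term γ j a b c f hγ hc hf hz' hl₁ hl₂ =>
    obtain ⟨K, hK⟩ := hγ
    refine ⟨K, fun p q ω hω => ?_⟩
    have hQ := energy_pos q
    have hK0 : 0 ≤ K :=
      nonneg_of_mul_nonneg_left ((abs_nonneg _).trans (hK q ω hω)) (pow_pos hQ j)
    calc |γ q ω * monomial a b c f p q|
        ≤ K * energy q ^ j * energy q ^ max (∑ k, (a k : ℤ) + b + f) 0 := by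
          rw [abs_mul]
          exact mul_le_mul (hK q ω hω) (abs_monomial_le hc hf (by omega) p q) (abs_nonneg _)
            ((abs_nonneg _).trans (hK q ω hω))
      _ = K * energy q ^ ((j : ℤ) + max (∑ k, (a k : ℤ) + b + f) 0) := by
          rw [zpow_add₀ hQ.ne', zpow_natCast, mul_assoc]
      _ ≤ K * energy q ^ N := by
          rw [← zpow_natCast]
          exact mul_le_mul_of_nonneg_left
            (zpow_le_zpow_right₀ (one_le_energy q) (by omega)) hK0

theorem eventually_bound (h : IsMonomialSum z l₁ l₂ F) (hz : z ≤ 0) {N : ℕ} (h₁ : l₁ ≤ N)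
    (h₂ : l₂ ≤ N) :
    ∀ᶠ C in Filter.atTop, ∀ p q ω : ι → ℝ, ω ⬝ᵥ ω = 1 → |F p q ω| ≤ C * energy q ^ N := by
  obtain ⟨C₀, hC₀⟩ := h.exists_bound hz h₁ h₂
  filter_upwards [Filter.eventually_ge_atTop C₀] with C hC p q ω hω
  exact (hC₀ p q ω hω).trans
    (mul_le_mul_of_nonneg_right hC (pow_nonneg (energy_pos q).le N))

end IsMonomialSum

open IsMonomialSum

lemma isMonomialSum_coeff {j : ℕ} {γ : (ι → ℝ) → (ι → ℝ) → ℝ} (hγ : BoundedByEnergyPow j γ) :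
    IsMonomialSum 0 j j fun _ q ω => γ q ω :=
  (term (a := 0) (b := 0) (c := 0) (f := 0) hγ le_rfl le_rfl (by simp) (by simp) le_rfl).congr
    fun p q ω => by simp [monomial]

lemma IsMonomialSum.const_mul {z l₁ l₂ : ℤ} {F : (ι → ℝ) → (ι → ℝ) → (ι → ℝ) → ℝ} (r : ℝ)
    (h : IsMonomialSum z l₁ l₂ F) : IsMonomialSum z l₁ l₂ fun p q ω => r * F p q ω :=
  ((isMonomialSum_coeff (BoundedByEnergyPow.const r)).mul h).mono (by omega) (by omega)
    (by omega)

lemma IsMonomialSum.sub_max {z l₁ l₂ z' l₁' l₂' : ℤ} {F G : (ι → ℝ) → (ι → ℝ) → (ι → ℝ) → ℝ}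
    (hF : IsMonomialSum z l₁ l₂ F) (hG : IsMonomialSum z' l₁' l₂' G) :
    IsMonomialSum (max z z') (max l₁ l₁') (max l₂ l₂') fun p q ω => F p q ω - G p q ω :=
  (hF.add_max (hG.const_mul (-1))).congr fun _ _ _ => by ring

lemma isMonomialSum_energy : IsMonomialSum 2 1 0 fun p (_ _ : ι → ℝ) => energy p :=
  (term (a := 0) (b := 1) (c := 0) (f := 0) (BoundedByEnergyPow.const 1) le_rfl le_rfl
    (by simp) (by simp) le_rfl).congr fun p q ω => by simp [monomial]

lemma isMonomialSum_energy_inv :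
    IsMonomialSum (-2) (-1) 0 fun p (_ _ : ι → ℝ) => (energy p)⁻¹ :=
  (term (a := 0) (b := -1) (c := 0) (f := 0) (BoundedByEnergyPow.const 1) le_rfl le_rfl
    (by simp) (by simp) le_rfl).congr fun p q ω => by simp [monomial]

lemma isMonomialSum_sqrtS_inv : IsMonomialSum (-1) 0 0 fun p q (_ : ι → ℝ) => (sqrtS p q)⁻¹ :=
  (term (a := 0) (b := 0) (c := -1) (f := 0) (BoundedByEnergyPow.const 1) (by simp) le_rfl
    (by simp) (by simp) le_rfl).congr fun p q ω => by simp [monomial]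

lemma isMonomialSum_totalEnergyAddSqrtS_inv :
    IsMonomialSum (-2) (-1) 0 fun p q (_ : ι → ℝ) => (totalEnergyAddSqrtS p q)⁻¹ :=
  (term (a := 0) (b := 0) (c := 0) (f := -1) (BoundedByEnergyPow.const 1) le_rfl (by simp)
    (by simp) (by simp) le_rfl).congr fun p q ω => by simp [monomial]

variable [DecidableEq ι]

lemma isMonomialSum_apply (k : ι) : IsMonomialSum 2 1 0 fun p (_ _ : ι → ℝ) => p k :=
  (term (a := Pi.single k 1) (b := 0) (c := 0) (f := 0) (BoundedByEnergyPow.const 1) le_rfl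
    le_rfl (by simp [Pi.single_apply]) (by simp [Pi.single_apply]) le_rfl).congr
    fun p q ω => by simp [monomial, Pi.single_apply, pow_ite]

lemma isMonomialSum_dotProduct {j : ℕ} {w : (ι → ℝ) → (ι → ℝ) → ι → ℝ}
    (hw : ∀ k, BoundedByEnergyPow j fun q ω => w q ω k) :
    IsMonomialSum 2 (1 + j) j fun p q ω => p ⬝ᵥ w q ω :=
  sum Finset.univ fun k _ => ((isMonomialSum_apply k).mul (isMonomialSum_coeff (hw k))).mono
    (by omega) (by omega) (by omega)

lemma isMonomialSum_mandelstamS :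
    IsMonomialSum 2 2 1 fun p q (_ : ι → ℝ) => mandelstamS p q := by
  have h := ((isMonomialSum_coeff (BoundedByEnergyPow.const 2)).add_max
    ((isMonomialSum_energy.const_mul 2).mul
      (isMonomialSum_coeff BoundedByEnergyPow.energy))).sub_max
    ((isMonomialSum_dotProduct fun k => BoundedByEnergyPow.apply (ι := ι) k).const_mul 2)
  exact (h.mono (by omega) (by omega) (by omega)).congr fun p q ω => by unfold mandelstamS; ring

lemma isMonomialSum_logDerivAlong (i : ι) (b c f : ℤ) :
    IsMonomialSum (-2) 1 1 fun p q (_ : ι → ℝ) => logDerivAlong i b c f p q := by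
  have dP := (isMonomialSum_apply i).mul isMonomialSum_energy_inv
  have dR := (((isMonomialSum_coeff BoundedByEnergyPow.energy).mul dP).sub_max
    (isMonomialSum_coeff (BoundedByEnergyPow.apply i))).mul isMonomialSum_sqrtS_inv
  have h := (((dP.mul isMonomialSum_energy_inv).const_mul b).add_max
    ((dR.mul isMonomialSum_sqrtS_inv).const_mul c)).add_max
    (((dP.add_max dR).mul isMonomialSum_totalEnergyAddSqrtS_inv).const_mul f)
  exact (h.mono (by omega) (by omega) (by omega)).congr fun p q ω => by
    simp only [logDerivAlong]
    ring

namespace IsMonomialSum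

variable {z l₁ l₂ : ℤ} {F : (ι → ℝ) → (ι → ℝ) → (ι → ℝ) → ℝ}

theorem exists_hasDerivAlongAt (h : IsMonomialSum z l₁ l₂ F) (i : ι) :
    ∃ F', IsMonomialSum (z - 2) (l₁ + 1) (l₂ + 1) F' ∧
      ∀ p q ω, HasDerivAlongAt (Pi.single i 1) (F · q ω) (F' p q ω) p := by
  induction h with
  | zero => exact ⟨_, zero, fun _ _ _ => hasDerivAlongAt_const 0⟩
  | add _ _ ih₁ ih₂ =>
    obtain ⟨F₁, h₁, hd₁⟩ := ih₁
    obtain ⟨F₂, h₂, hd₂⟩ := ih₂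
    exact ⟨_, add h₁ h₂, fun p q ω => (hd₁ p q ω).add (hd₂ p q ω)⟩
  | @term γ j a b c f hγ hc hf hz hl₁ hl₂ =>
    refine ⟨fun p q ω => γ q ω * (a i * monomial (a - Pi.single i 1) b c f p q
      + monomial a b c f p q * logDerivAlong i b c f p q), ?_,
      fun p q ω => (hasDerivAlongAt_monomial i a b c f p q).const_mul (γ q ω)⟩
    have hpow : IsMonomialSum (z - 2) (l₁ + 1) (l₂ + 1) fun p q ω =>
        γ q ω * (a i * monomial (a - Pi.single i 1) b c f p q) := by
      by_cases ha : a i = 0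
      · exact zero.congr fun p q ω => by simp [ha]
      · have hsum := sum_natCast_sub_single ha
        exact (term (a := a - Pi.single i 1) (b := b) (hγ.mul (BoundedByEnergyPow.const (a i)))
          hc hf (by omega) (by push_cast; omega) (by push_cast; omega)).congr
          fun p q ω => by ring
    have hlog : IsMonomialSum (z - 2) (l₁ + 1) (l₂ + 1) _ :=
      ((term hγ hc hf hz hl₁ hl₂).mul (isMonomialSum_logDerivAlong i b c f)).mono
        (by omega) le_rfl le_rfl
    exact (add hpow hlog).congr fun p q ω => by ring

theorem fderiv_single (h : IsMonomialSum z l₁ l₂ F) (i : ι) :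
    IsMonomialSum (z - 2) (l₁ + 1) (l₂ + 1) fun p q ω =>
      fderiv ℝ (F · q ω) p (Pi.single i 1) := by
  obtain ⟨F', hF', hd⟩ := h.exists_hasDerivAlongAt i
  exact hF'.congr fun p q ω => (hd p q ω).fderiv_apply.symm

end IsMonomialSum

end MonomialSums

namespace IsMonomialSum

variable {z l₁ l₂ : ℤ} {F : (Fin 3 → ℝ) → (Fin 3 → ℝ) → (Fin 3 → ℝ) → ℝ}

theorem iterate_pd (h : IsMonomialSum z l₁ l₂ F) (i : Fin 3) (n : ℕ) :
    IsMonomialSum (z - 2 * n) (l₁ + n) (l₂ + n) fun p q ω => (pd i)^[n] (F · q ω) p := by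
  induction n with
  | zero => simpa using h
  | succ n ih =>
    refine ((ih.fderiv_single i).mono (by push_cast; omega) (by push_cast; omega)
      (by push_cast; omega)).congr fun p q ω => ?_
    rw [Function.iterate_succ_apply']
    rfl

theorem multiDeriv (h : IsMonomialSum z l₁ l₂ F) (A : Fin 3 → ℕ) :
    IsMonomialSum (z - 2 * ∑ i, (A i : ℤ)) (l₁ + ∑ i, (A i : ℤ)) (l₂ + ∑ i, (A i : ℤ))
      fun p q ω => _root_.multiDeriv A (F · q ω) p := by
  rw [Fin.sum_univ_three]
  exact (((h.iterate_pd 2 (A 2)).iterate_pd 1 (A 1)).iterate_pd 0 (A 0)).mono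
    (by omega) (by omega) (by omega)

end IsMonomialSum

lemma postP_eq (p q ω : Fin 3 → ℝ) (j : Fin 3) :
    postP p q ω j = p j + 2 * (q ⬝ᵥ ω - (p + q) ⬝ᵥ ω
        * (2 * energy q + mandelstamS p q / sqrtS p q) / (2 * totalEnergyAddSqrtS p q))
      * (ω j + (p + q) ⬝ᵥ ω * (p j + q j) / (sqrtS p q * totalEnergyAddSqrtS p q)) := by
  have hnq : (p + q) ⬝ᵥ q = energy q * (energy p + energy q) - mandelstamS p q / 2 := by
    rw [add_dotProduct, mandelstamS]
    linear_combination -energy_sq q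
  simp only [postP]
  rw [← energy, ← energy, mandelstamS_eq, ← sqrtS, hnq, Pi.add_apply]
  have := sqrtS_pos p q
  have := totalEnergyAddSqrtS_pos p q
  unfold totalEnergyAddSqrtS at *
  field_simp
  ring

lemma isMonomialSum_postP (j : Fin 3) : IsMonomialSum 2 3 4 fun p q ω => postP p q ω j := by
  have nω := (isMonomialSum_dotProduct fun k =>
    BoundedByEnergyPow.unit_apply (ι := Fin 3) k).add_max
    (isMonomialSum_coeff BoundedByEnergyPow.dotProduct_unit)
  have M := (isMonomialSum_coeff BoundedByEnergyPow.dotProduct_unit).sub_max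
    (((nω.mul (((isMonomialSum_coeff BoundedByEnergyPow.energy).const_mul 2).add_max
      (isMonomialSum_mandelstamS.mul isMonomialSum_sqrtS_inv))).mul
      isMonomialSum_totalEnergyAddSqrtS_inv).const_mul (1 / 2))
  have V := (isMonomialSum_coeff (BoundedByEnergyPow.unit_apply j)).add_max
    (((nω.mul ((isMonomialSum_apply j).add_max
      (isMonomialSum_coeff (BoundedByEnergyPow.apply j)))).mul isMonomialSum_sqrtS_inv).mul
      isMonomialSum_totalEnergyAddSqrtS_inv)
  exact (((isMonomialSum_apply j).add_max ((M.mul V).const_mul 2)).mono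
    (by omega) (by omega) (by omega)).congr fun p q ω => by rw [postP_eq, add_dotProduct]; ring

lemma isMonomialSum_postQ (j : Fin 3) : IsMonomialSum 2 3 4 fun p q ω => postQ p q ω j :=
  ((((isMonomialSum_apply j).add_max (isMonomialSum_coeff (BoundedByEnergyPow.apply j))).sub_max
    (isMonomialSum_postP j)).mono (by omega) (by omega) (by omega)).congr fun _ _ _ => rfl

end RelativisticCollision

open RelativisticCollision Filter

/-- **Derivatives of the post-collision momenta**: for every multi-index `A` with
`|A| ≥ 1` there is `C > 0`, independent of `p`, such that for all `p, q ∈ ℝ³` and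
unit vectors `ω ∈ 𝕊²`, `|∂^A_p p'| + |∂^A_p q'| ≤ C (q⁰)^{|A|+4}`. -/
theorem multiDeriv_postCollision_bound (A : Fin 3 → ℕ) (hA : 1 ≤ ∑ i, A i) :
    ∃ C > 0, ∀ p q ω : Fin 3 → ℝ, ω ⬝ᵥ ω = 1 →
      Real.sqrt (∑ j, (multiDeriv A (fun x => postP x q ω j) p)^2)
        + Real.sqrt (∑ j, (multiDeriv A (fun x => postQ x q ω j) p)^2)
        ≤ C * Real.sqrt (1 + q ⬝ᵥ q) ^ ((∑ i, A i) + 4) := by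
  have hA' : (1 : ℤ) ≤ ∑ i, (A i : ℤ) := by exact_mod_cast hA
  have bound {F} (hF : IsMonomialSum 2 3 4 F) : ∀ᶠ C in atTop, ∀ p q ω : Fin 3 → ℝ,
      ω ⬝ᵥ ω = 1 → |multiDeriv A (F · q ω) p| ≤ C * energy q ^ ((∑ i, A i) + 4) :=
    (hF.multiDeriv A).eventually_bound (by omega) (by push_cast; omega) (by push_cast; omega)
  obtain ⟨C, hC, hP, hQ⟩ := ((eventually_gt_atTop 0).and
    ((eventually_all.2 fun j => bound (isMonomialSum_postP j)).and
      (eventually_all.2 fun j => bound (isMonomialSum_postQ j)))).exists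
  refine ⟨2 * (3 * C), by positivity, fun p q ω hω => ?_⟩
  have hB : 0 ≤ C * energy q ^ ((∑ i, A i) + 4) := by have := energy_pos q; positivity
  have hP' := sqrt_sum_sq_le_card_mul hB fun j => hP j p q ω hω
  have hQ' := sqrt_sum_sq_le_card_mul hB fun j => hQ j p q ω hω
  rw [Fintype.card_fin, Nat.cast_ofNat] at hP' hQ'
  change _ ≤ _ * energy q ^ _
  linarith

end
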